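/- arXiv:2410.10807 — 3 statements merged into one kernel-verified Lean document; each statement's English description precedes it below -/
import Mathlib

section
/- Let A ∈ ℝ^{m×n} have full row rank (so AAᵀ is invertible) and define the pseudoinverse A⁺ = Aᵀ(AAᵀ)⁻¹. Then for any y ∈ ℝ^n and b ∈ ℝ^m, the point z = y - A⁺·ReLU(Ay - b) satisfies Az ≤ b componentwise. -/
open Matrix

/-- Componentwise ReLU on vectors. -/
noncomputable def vecReLU {m : ℕ} (v : Fin m → ℝ) : Fin m → ℝ := fun i => max (v i) 0

theorem stmt_2 {m n : ℕ} (A : Matrix (Fin m) (Fin n) ℝ) (hA : A.rank = m)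
    (y : Fin n → ℝ) (b : Fin m → ℝ) :
    ∀ i, A.mulVec (y - (Aᵀ * (A * Aᵀ)⁻¹).mulVec (vecReLU (A.mulVec y - b))) i ≤ b i := by
  have hrank : (A * Aᵀ).rank = m := by rw [Matrix.rank_self_mul_transpose, hA]
  have hu : IsUnit (A * Aᵀ) := by
    rw [← Matrix.mulVec_surjective_iff_isUnit]
    have htop : LinearMap.range (A * Aᵀ).mulVecLin = ⊤ := by
      apply Submodule.eq_top_of_finrank_eq
      rw [← Matrix.rank, hrank]
      simp [Module.finrank_pi]
    intro v
    have hv : v ∈ LinearMap.range (A * Aᵀ).mulVecLin := htop ▸ Submodule.mem_top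
    obtain ⟨x, hx⟩ := hv
    exact ⟨x, hx⟩
  have hinv : A * (Aᵀ * (A * Aᵀ)⁻¹) = 1 := by
    rw [← Matrix.mul_assoc]
    exact Matrix.mul_nonsing_inv _ (Matrix.isUnit_iff_isUnit_det _ |>.mp hu)
  intro i
  have key : A.mulVec (y - (Aᵀ * (A * Aᵀ)⁻¹).mulVec (vecReLU (A.mulVec y - b)))
      = A.mulVec y - vecReLU (A.mulVec y - b) := by
    rw [Matrix.mulVec_sub, Matrix.mulVec_mulVec, hinv, Matrix.one_mulVec]
  rw [key]
  have : A.mulVec y i - b i ≤ max (A.mulVec y i - b i) 0 := le_max_left _ _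
  simp only [Pi.sub_apply, vecReLU, Pi.sub_apply]
  linarith
end

section
/- Let A = [A₁ A₂], C = [C₁ C₂] with C₁ invertible and Ã = A₂ - A₁C₁⁻¹C₂ having full row rank. For any w ∈ ℝ^{n-k}, define w* = w - Ã⁺·ReLU(Ãw - b̃) with b̃ = b - A₁C₁⁻¹d and Ã⁺ = Ãᵀ(ÃÃᵀ)⁻¹, and define y* = (C₁⁻¹(d - C₂w*), w*). Then Ay* ≤ b and Cy* = d. -/
open Matrix

theorem stmt_6 {m k p : ℕ}
    (A₁ : Matrix (Fin m) (Fin k) ℝ) (A₂ : Matrix (Fin m) (Fin p) ℝ)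
    (C₁ : Matrix (Fin k) (Fin k) ℝ) (hC₁ : IsUnit C₁)
    (C₂ : Matrix (Fin k) (Fin p) ℝ)
    (b : Fin m → ℝ) (d : Fin k → ℝ) (w : Fin p → ℝ)
    (Atil : Matrix (Fin m) (Fin p) ℝ) (hAtil : Atil = A₂ - A₁ * C₁⁻¹ * C₂)
    (hrank : Atil.rank = m)
    (btil : Fin m → ℝ) (hbtil : btil = b - (A₁ * C₁⁻¹).mulVec d)
    (wstar : Fin p → ℝ)
    (hwstar : wstar = w - (Atilᵀ * (Atil * Atilᵀ)⁻¹).mulVec (vecReLU (Atil.mulVec w - btil))) :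
    (∀ i, (A₁.mulVec (C₁⁻¹.mulVec (d - C₂.mulVec wstar)) + A₂.mulVec wstar) i ≤ b i) ∧
    C₁.mulVec (C₁⁻¹.mulVec (d - C₂.mulVec wstar)) + C₂.mulVec wstar = d := by
  -- Gram matrix is invertible
  have hG : IsUnit (Atil * Atilᵀ) := by
    rw [← Matrix.mulVec_surjective_iff_isUnit]
    have hr : (Atil * Atilᵀ).rank = m := by
      rw [Matrix.rank_self_mul_transpose, hrank]
    have htop : LinearMap.range (Atil * Atilᵀ).mulVecLin = ⊤ := by
      apply Submodule.eq_top_of_finrank_eq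
      rw [Module.finrank_fintype_fun_eq_card, Fintype.card_fin]
      exact hr
    intro y
    have : y ∈ LinearMap.range (Atil * Atilᵀ).mulVecLin := htop ▸ Submodule.mem_top
    obtain ⟨x, hx⟩ := this
    exact ⟨x, hx⟩
  have hGdet : IsUnit (Atil * Atilᵀ).det := (Matrix.isUnit_iff_isUnit_det _).mp hG
  have hC₁det : IsUnit C₁.det := (Matrix.isUnit_iff_isUnit_det _).mp hC₁
  set r : Fin m → ℝ := vecReLU (Atil.mulVec w - btil) with hr
  -- key: Atil wstar = Atil w - r
  have hkey : Atil.mulVec wstar = Atil.mulVec w - r := by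
    rw [hwstar, Matrix.mulVec_sub, Matrix.mulVec_mulVec, ← Matrix.mul_assoc,
      Matrix.mul_nonsing_inv _ hGdet, Matrix.one_mulVec]
  constructor
  · intro i
    have h1 : A₁.mulVec (C₁⁻¹.mulVec (d - C₂.mulVec wstar)) + A₂.mulVec wstar
        = (A₁ * C₁⁻¹).mulVec d + Atil.mulVec wstar := by
      rw [hAtil, Matrix.sub_mulVec, Matrix.mulVec_sub, Matrix.mulVec_sub,
        Matrix.mulVec_mulVec, Matrix.mulVec_mulVec, Matrix.mulVec_mulVec]
      abel
    rw [h1, hkey]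
    have h2 : btil i = b i - (A₁ * C₁⁻¹).mulVec d i := by rw [hbtil]; rfl
    have h3 : (Atil.mulVec w - r) i ≤ btil i := by
      have : Atil.mulVec w i - btil i ≤ max (Atil.mulVec w i - btil i) 0 := le_max_left _ _
      simp only [Pi.sub_apply, hr, vecReLU]
      linarith
    have := h3
    rw [h2] at this
    simp only [Pi.add_apply, Pi.sub_apply] at this ⊢
    linarith
  · rw [Matrix.mulVec_mulVec, Matrix.mul_nonsing_inv _ hC₁det, Matrix.one_mulVec]
    simp
end

section
/- Let à ∈ ℝ^{m×p} have full row rank with pseudoinverse Ã⁺ = Ãᵀ(ÃÃᵀ)⁻¹, and let g, h ∈ ℝ^p with Ãg ≤ b̃ componentwise. Define h* = h - Ã⁺·ReLU(Ãh - b̃). Then ‖g - h*‖₂ ≤ (1 + ‖Ã⁺‖₂·‖Ã‖₂)·‖g - h‖₂, where ‖·‖₂ on matrices is the spectral norm. -/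
open Matrix

/-- Euclidean (ℓ²) norm of a vector in `Fin p → ℝ`. -/
noncomputable def euclNorm {p : ℕ} (v : Fin p → ℝ) : ℝ :=
  ‖(WithLp.equiv 2 (Fin p → ℝ)).symm v‖

/-- Spectral norm (ℓ²→ℓ² operator norm) of a real matrix. -/
noncomputable def specNorm {m p : ℕ} (A : Matrix (Fin m) (Fin p) ℝ) : ℝ :=
  ‖LinearMap.toContinuousLinearMap (Matrix.toEuclideanLin A)‖

/-!
Write `g - h* = (g - h) + Ã⁺ ReLU(Ãh - b̃)`. Since `ReLU` is 1-Lipschitz and vanishes at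
`Ãg - b̃ ≤ 0`, we get `‖ReLU(Ãh - b̃)‖ ≤ ‖Ã(h - g)‖ ≤ ‖Ã‖ ‖g - h‖`, and the triangle inequality
together with `‖Ã⁺ v‖ ≤ ‖Ã⁺‖ ‖v‖` gives the bound.
-/

section EuclNorm

variable {m p : ℕ}

theorem euclNorm_add_le (u v : Fin p → ℝ) : euclNorm (u + v) ≤ euclNorm u + euclNorm v :=
  norm_add_le _ _

theorem euclNorm_sub_comm (u v : Fin p → ℝ) : euclNorm (u - v) = euclNorm (v - u) :=
  norm_sub_rev (WithLp.toLp 2 u) (WithLp.toLp 2 v)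

theorem euclNorm_le_of_abs_le {u v : Fin p → ℝ} (h : ∀ i, |u i| ≤ |v i|) :
    euclNorm u ≤ euclNorm v := by
  simp only [euclNorm, EuclideanSpace.norm_eq]
  gcongr with i
  exact h i

theorem euclNorm_mulVec_le (A : Matrix (Fin m) (Fin p) ℝ) (v : Fin p → ℝ) :
    euclNorm (A *ᵥ v) ≤ specNorm A * euclNorm v := by
  simpa [euclNorm, specNorm, Matrix.toLpLin_toLp] using
    (LinearMap.toContinuousLinearMap (Matrix.toEuclideanLin A)).le_opNorm (WithLp.toLp 2 v)

end EuclNorm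

section VecReLU

variable {m p : ℕ}

theorem vecReLU_eq_zero_of_nonpos {w : Fin m → ℝ} (hw : ∀ i, w i ≤ 0) : vecReLU w = 0 :=
  funext fun i => max_eq_right (hw i)

theorem euclNorm_vecReLU_sub_le (v w : Fin m → ℝ) :
    euclNorm (vecReLU v - vecReLU w) ≤ euclNorm (v - w) :=
  euclNorm_le_of_abs_le fun i => abs_max_sub_max_le_abs (v i) (w i) 0

theorem euclNorm_vecReLU_le_of_nonpos {v w : Fin m → ℝ} (hw : ∀ i, w i ≤ 0) :
    euclNorm (vecReLU v) ≤ euclNorm (v - w) := by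
  simpa [vecReLU_eq_zero_of_nonpos hw] using euclNorm_vecReLU_sub_le v w

theorem euclNorm_vecReLU_mulVec_sub_le (A : Matrix (Fin m) (Fin p) ℝ) {b : Fin m → ℝ}
    {g : Fin p → ℝ} (hg : ∀ i, (A *ᵥ g) i ≤ b i) (h : Fin p → ℝ) :
    euclNorm (vecReLU (A *ᵥ h - b)) ≤ specNorm A * euclNorm (g - h) := by
  have hviol : euclNorm (vecReLU (A *ᵥ h - b)) ≤ euclNorm (A *ᵥ (h - g)) := by
    simpa [mulVec_sub] using
      euclNorm_vecReLU_le_of_nonpos (v := A *ᵥ h - b) (w := A *ᵥ g - b)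
        fun i => sub_nonpos.mpr (hg i)
  rw [euclNorm_sub_comm]
  exact hviol.trans (euclNorm_mulVec_le A (h - g))

end VecReLU

theorem euclNorm_sub_sub_mulVec_vecReLU_le {m p : ℕ} (A : Matrix (Fin m) (Fin p) ℝ)
    (P : Matrix (Fin p) (Fin m) ℝ) {b : Fin m → ℝ} {g : Fin p → ℝ}
    (hg : ∀ i, (A *ᵥ g) i ≤ b i) (h : Fin p → ℝ) :
    euclNorm (g - (h - P *ᵥ vecReLU (A *ᵥ h - b))) ≤
      (1 + specNorm P * specNorm A) * euclNorm (g - h) := by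
  set r := vecReLU (A *ᵥ h - b)
  have hP : 0 ≤ specNorm P := norm_nonneg _
  calc euclNorm (g - (h - P *ᵥ r)) = euclNorm ((g - h) + P *ᵥ r) := by congr 1; abel
    _ ≤ euclNorm (g - h) + specNorm P * euclNorm r :=
        (euclNorm_add_le _ _).trans (add_le_add_right (euclNorm_mulVec_le P r) _)
    _ ≤ euclNorm (g - h) + specNorm P * (specNorm A * euclNorm (g - h)) := by
        gcongr
        exact euclNorm_vecReLU_mulVec_sub_le A hg h
    _ = (1 + specNorm P * specNorm A) * euclNorm (g - h) := by ring

theorem stmt_10_general {m p : ℕ} (Atil : Matrix (Fin m) (Fin p) ℝ)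
    (btil : Fin m → ℝ) (g h : Fin p → ℝ)
    (hg : ∀ i, Atil.mulVec g i ≤ btil i) :
    euclNorm (g - (h - (Atilᵀ * (Atil * Atilᵀ)⁻¹).mulVec (vecReLU (Atil.mulVec h - btil)))) ≤
      (1 + specNorm (Atilᵀ * (Atil * Atilᵀ)⁻¹) * specNorm Atil) * euclNorm (g - h) :=
  euclNorm_sub_sub_mulVec_vecReLU_le Atil (Atilᵀ * (Atil * Atilᵀ)⁻¹) hg h

theorem stmt_10 {m p : ℕ} (Atil : Matrix (Fin m) (Fin p) ℝ) (hrank : Atil.rank = m)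
    (btil : Fin m → ℝ) (g h : Fin p → ℝ)
    (hg : ∀ i, Atil.mulVec g i ≤ btil i) :
    euclNorm (g - (h - (Atilᵀ * (Atil * Atilᵀ)⁻¹).mulVec (vecReLU (Atil.mulVec h - btil)))) ≤
      (1 + specNorm (Atilᵀ * (Atil * Atilᵀ)⁻¹) * specNorm Atil) * euclNorm (g - h) :=
  stmt_10_general Atil btil g h hg
end
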